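/- Let D be an A⃗4-free oriented graph, let P = p1→p2→⋯→p_ℓ be a directed path in D that is a shortest directed path from p1 to p_ℓ, and let R^a be defined with respect to P. Let γ be an integer such that χ⃗(N(v)) ≤ γ for each v ∈ V(P). Then χ⃗(R^a) ≤ 3γ. -/

import Mathlib

namespace DichiP4

variable {V : Type*}

/-- An oriented graph: an arc relation with no digons (hence also no loops). -/
def Oriented (A : V → V → Prop) : Prop := ∀ u v, A u v → ¬ A v u

/-- Adjacency in the underlying (undirected) graph. -/
def Adj (A : V → V → Prop) (u v : V) : Prop := A u v ∨ A v u

/-- The neighborhood `N(v)` of a vertex in the underlying graph. -/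
def nbr (A : V → V → Prop) (v : V) : Set V := {w | Adj A v w}

/-- `N(S)`: the neighborhood of a set of vertices. -/
def nbrSet (A : V → V → Prop) (S : Set V) : Set V := (⋃ v ∈ S, nbr A v) \ S

/-- `N[S]`: the closed neighborhood of a set of vertices. -/
def cnbrSet (A : V → V → Prop) (S : Set V) : Set V := ⋃ v ∈ S, insert v (nbr A v)

/-- A clique in the underlying graph (= the vertex set of a tournament). -/
def IsClique (A : V → V → Prop) (K : Set V) : Prop :=
  ∀ u ∈ K, ∀ v ∈ K, u ≠ v → Adj A u v

/-- The clique number `ω(D)` of the underlying graph. -/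
noncomputable def cliqueNum (A : V → V → Prop) : ℕ :=
  sSup {n | ∃ K : Set V, IsClique A K ∧ K.Finite ∧ K.ncard = n}

/-- The set `s` induces an acyclic subdigraph (no directed cycle within `s`). -/
def AcyclicOn (A : V → V → Prop) (s : Set V) : Prop :=
  ∀ v, ¬ Relation.TransGen (fun x y => x ∈ s ∧ y ∈ s ∧ A x y) v v

/-- The set `s` admits a dicoloring with `k` colors: every color class induces an
acyclic subdigraph. -/
def DicolorableOn (A : V → V → Prop) (s : Set V) (k : ℕ) : Prop :=
  ∃ c : V → ℕ, (∀ v ∈ s, c v < k) ∧ ∀ i : ℕ, AcyclicOn A {v | v ∈ s ∧ c v = i}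

/-- The dichromatic number `χ⃗(s)` of the subdigraph induced by `s`. -/
noncomputable def dichi (A : V → V → Prop) (s : Set V) : ℕ :=
  sInf {k | DicolorableOn A s k}

/-- `A` has an induced subdigraph isomorphic to `B`. -/
def HasInducedCopy {W : Type*} (A : V → V → Prop) (B : W → W → Prop) : Prop :=
  ∃ f : W → V, Function.Injective f ∧ ∀ x y : W, B x y ↔ A (f x) (f y)

/-- `A` is `B`-free: no induced subdigraph of `A` is isomorphic to `B`. -/
def Free {W : Type*} (A : V → V → Prop) (B : W → W → Prop) : Prop :=
  ¬ HasInducedCopy A B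

/-- `P⃗4`: the orientation of the path `0 – 1 – 2 – 3` with arcs `0→1, 1→2, 2→3`. -/
def P4vec : Fin 4 → Fin 4 → Prop := fun x y =>
  (x = 0 ∧ y = 1) ∨ (x = 1 ∧ y = 2) ∨ (x = 2 ∧ y = 3)

/-- `A⃗4`: the orientation of the path `0 – 1 – 2 – 3` with arcs `1→0, 1→2, 3→2`. -/
def A4vec : Fin 4 → Fin 4 → Prop := fun x y =>
  (x = 1 ∧ y = 0) ∨ (x = 1 ∧ y = 2) ∨ (x = 3 ∧ y = 2)

/-- `Q⃗4`: the orientation of the path `0 – 1 – 2 – 3` with arcs `0→1, 2→1, 3→2`. -/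
def Q4vec : Fin 4 → Fin 4 → Prop := fun x y =>
  (x = 0 ∧ y = 1) ∨ (x = 2 ∧ y = 1) ∨ (x = 3 ∧ y = 2)

/-- `Q⃗4'`: the orientation of the path `0 – 1 – 2 – 3` with arcs `1→0, 2→1, 2→3`. -/
def Q4'vec : Fin 4 → Fin 4 → Prop := fun x y =>
  (x = 1 ∧ y = 0) ∨ (x = 2 ∧ y = 1) ∨ (x = 2 ∧ y = 3)

/-- `B` is an orientation of the path on four vertices `0 – 1 – 2 – 3`. -/
def IsP4Orientation (B : Fin 4 → Fin 4 → Prop) : Prop :=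
  Oriented B ∧ ∀ x y : Fin 4, Adj B x y ↔ ((x : ℕ) + 1 = (y : ℕ) ∨ (y : ℕ) + 1 = (x : ℕ))

/-- `p 1 → p 2 → ⋯ → p ℓ` is a directed path in `A` (distinct vertices). -/
def IsDirPath (A : V → V → Prop) (ℓ : ℕ) (p : ℕ → V) : Prop :=
  1 ≤ ℓ ∧ Set.InjOn p (Set.Icc 1 ℓ) ∧ ∀ i, 1 ≤ i → i < ℓ → A (p i) (p (i + 1))

/-- A directed path `p 1 → ⋯ → p ℓ` is forward-induced: no arc `(p i, p j)` with
`j > i + 1`. -/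
def ForwardInduced (A : V → V → Prop) (ℓ : ℕ) (p : ℕ → V) : Prop :=
  ∀ i j, 1 ≤ i → j ≤ ℓ → i + 1 < j → ¬ A (p i) (p j)

/-- `p 1 → ⋯ → p ℓ` is a shortest directed path from `p 1` to `p ℓ`. -/
def IsShortestDirPath (A : V → V → Prop) (ℓ : ℕ) (p : ℕ → V) : Prop :=
  IsDirPath A ℓ p ∧
    ∀ (m : ℕ) (q : ℕ → V), IsDirPath A m q → q 1 = p 1 → q m = p ℓ → ℓ ≤ m

/-- The vertex set `V(P)` of the path `p 1, …, p ℓ`. -/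
def pathSet (ℓ : ℕ) (p : ℕ → V) : Set V := p '' Set.Icc 1 ℓ

/-- `N(P)`: the neighborhood of the vertex set of the path. -/
def pathNbrs (A : V → V → Prop) (ℓ : ℕ) (p : ℕ → V) : Set V := nbrSet A (pathSet ℓ p)

/-- `F i`: vertices of `N(P)` whose first neighbor on the path is `p i`. -/
def Fatt (A : V → V → Prop) (ℓ : ℕ) (p : ℕ → V) (i : ℕ) : Set V :=
  {v ∈ pathNbrs A ℓ p | Adj A v (p i) ∧ ∀ i', 1 ≤ i' → i' < i → ¬ Adj A v (p i')}

/-- `L j`: vertices of `N(P)` whose last neighbor on the path is `p j`. -/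
def Latt (A : V → V → Prop) (ℓ : ℕ) (p : ℕ → V) (j : ℕ) : Set V :=
  {v ∈ pathNbrs A ℓ p | Adj A v (p j) ∧ ∀ j', j < j' → j' ≤ ℓ → ¬ Adj A v (p j')}

/-- `F i ⁺`: in-neighbors of `p i` in `F i`. -/
def FattP (A : V → V → Prop) (ℓ : ℕ) (p : ℕ → V) (i : ℕ) : Set V :=
  {v ∈ Fatt A ℓ p i | A v (p i)}

/-- `F i ⁻`: out-neighbors of `p i` in `F i`. -/
def FattM (A : V → V → Prop) (ℓ : ℕ) (p : ℕ → V) (i : ℕ) : Set V :=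
  {v ∈ Fatt A ℓ p i | A (p i) v}

/-- `L j ⁺`: in-neighbors of `p j` in `L j`. -/
def LattP (A : V → V → Prop) (ℓ : ℕ) (p : ℕ → V) (j : ℕ) : Set V :=
  {v ∈ Latt A ℓ p j | A v (p j)}

/-- `L j ⁻`: out-neighbors of `p j` in `L j`. -/
def LattM (A : V → V → Prop) (ℓ : ℕ) (p : ℕ → V) (j : ℕ) : Set V :=
  {v ∈ Latt A ℓ p j | A (p j) v}

/-- `W^p = (F₂⁻ ∪ ⋯ ∪ F_{ℓ-1}⁻) ∪ (L₂⁺ ∪ ⋯ ∪ L_{ℓ-1}⁺)`. -/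
def Wp (A : V → V → Prop) (ℓ : ℕ) (p : ℕ → V) : Set V :=
  (⋃ i ∈ Set.Icc 2 (ℓ - 1), FattM A ℓ p i) ∪ ⋃ i ∈ Set.Icc 2 (ℓ - 1), LattP A ℓ p i

/-- `W^a = (F₂⁺ ∪ ⋯ ∪ F_{ℓ-1}⁺) ∪ (L₂⁻ ∪ ⋯ ∪ L_{ℓ-1}⁻)`. -/
def Wa (A : V → V → Prop) (ℓ : ℕ) (p : ℕ → V) : Set V :=
  (⋃ i ∈ Set.Icc 2 (ℓ - 1), FattP A ℓ p i) ∪ ⋃ i ∈ Set.Icc 2 (ℓ - 1), LattM A ℓ p i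

/-- `R^p = N(P) \ (N({p1, p2, pℓ}) ∪ W^p)`. -/
def Rp (A : V → V → Prop) (ℓ : ℕ) (p : ℕ → V) : Set V :=
  pathNbrs A ℓ p \ (nbrSet A {p 1, p 2, p ℓ} ∪ Wp A ℓ p)

/-- `R^a = N(P) \ (N({p1, pℓ}) ∪ W^a)`. -/
def Ra (A : V → V → Prop) (ℓ : ℕ) (p : ℕ → V) : Set V :=
  pathNbrs A ℓ p \ (nbrSet A {p 1, p ℓ} ∪ Wa A ℓ p)

/-- A dipolar set: a nonempty set `S` partitioned into `S⁺` (no out-neighbor outside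
`S`) and `S⁻` (no in-neighbor outside `S`). -/
def IsDipolar (A : V → V → Prop) (S : Set V) : Prop :=
  S.Nonempty ∧ ∃ Sp Sm : Set V, Sp ∪ Sm = S ∧ Disjoint Sp Sm ∧
    (∀ v ∈ Sp, ∀ w, w ∉ S → ¬ A v w) ∧ ∀ v ∈ Sm, ∀ w, w ∉ S → ¬ A w v

/-- Reachability by a directed path staying inside `s`. -/
def ReachIn (A : V → V → Prop) (s : Set V) (u v : V) : Prop :=
  Relation.ReflTransGen (fun x y => x ∈ s ∧ y ∈ s ∧ A x y) u v

/-- A digraph is strongly connected. -/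
def StronglyConnected (A : V → V → Prop) : Prop :=
  ∀ u v : V, Relation.ReflTransGen A u v

/-- `t` is a strongly connected component of the subdigraph induced by `s`. -/
def IsSCCOf (A : V → V → Prop) (s t : Set V) : Prop :=
  t ⊆ s ∧ t.Nonempty ∧ (∀ u ∈ t, ∀ v ∈ t, ReachIn A s u v) ∧
    ∀ u ∈ t, ∀ v ∈ s, ReachIn A s u v → ReachIn A s v u → v ∈ t

/-- A source strongly connected component: all arcs between it and the rest of `s`
begin in it. -/
def IsSourceSCC (A : V → V → Prop) (s t : Set V) : Prop :=
  IsSCCOf A s t ∧ ∀ u ∈ s, ∀ v ∈ t, A u v → u ∈ t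

/-- A sink strongly connected component: all arcs between it and the rest of `s`
end in it. -/
def IsSinkSCC (A : V → V → Prop) (s t : Set V) : Prop :=
  IsSCCOf A s t ∧ ∀ u ∈ t, ∀ v ∈ s, A u v → v ∈ t

/-- `K` (a tournament of maximum order) and the directed path `p 1 → ⋯ → p ℓ`
(from a source SCC of `D[K]` to a sink SCC of `D[K]`) form a closed tournament
`C = K ∪ V(P)`. -/
def FormsClosedTournament (A : V → V → Prop) (K : Set V) (ℓ : ℕ) (p : ℕ → V) : Prop :=
  IsClique A K ∧ K.Finite ∧ K.ncard = cliqueNum A ∧ IsDirPath A ℓ p ∧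
    (∃ t, IsSourceSCC A K t ∧ p 1 ∈ t) ∧ ∃ t, IsSinkSCC A K t ∧ p ℓ ∈ t

/-- `K` and `P` form a path-minimizing closed tournament: `|P|` is minimum among
all pairs forming a closed tournament. -/
def FormsPathMinClosedTournament (A : V → V → Prop) (K : Set V) (ℓ : ℕ) (p : ℕ → V) :
    Prop :=
  FormsClosedTournament A K ℓ p ∧
    ∀ (K' : Set V) (ℓ' : ℕ) (p' : ℕ → V), FormsClosedTournament A K' ℓ' p' → ℓ ≤ ℓ'

/-- The strong neighborhood of `S`: neighbors of `S` having both an in-neighbor and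
an out-neighbor in `S`. -/
def strongNbrs (A : V → V → Prop) (S : Set V) : Set V :=
  {v ∈ nbrSet A S | (∃ u ∈ S, A u v) ∧ ∃ u ∈ S, A v u}

/-!
Write `f v` and `l v` for the indices of the first and last neighbours on `P` of `v ∈ R^a`;
the definition of `R^a` forces `p (f v) → v → p (l v)` and `f v < l v`. For an arc `x → y`
inside `R^a`, the path `p 1 ⋯ p (f x) x y p (l y) ⋯ p ℓ` is not shorter than `P`, so
`f y < l y ≤ f x + 3`. Colour `v` by `f v mod 3` together with its colour in a `γ`-dicolouring
of `N(p (f v))`: along arcs of a colour class `f` cannot increase, so a monochromatic cycle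
lies in a single `N(p i)` and is monochromatic there.
-/

lemma adj_comm {A : V → V → Prop} {u v : V} : Adj A u v ↔ Adj A v u := by
  simp only [Adj, or_comm]

section Dicoloring

variable {A : V → V → Prop} {s t : Set V} {k : ℕ}

lemma AcyclicOn.subset (hst : s ⊆ t) (ht : AcyclicOn A t) : AcyclicOn A s :=
  fun v hv => ht v (Relation.TransGen.mono (fun _ _ h => ⟨hst h.1, hst h.2.1, h.2.2⟩) _ _ hv)

lemma DicolorableOn.subset (hst : s ⊆ t) (ht : DicolorableOn A t k) : DicolorableOn A s k := by
  obtain ⟨c, hlt, hacyc⟩ := ht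
  exact ⟨c, fun v hv => hlt v (hst hv), fun i => AcyclicOn.subset (t := {v | v ∈ t ∧ c v = i})
    (fun _ hv => ⟨hst hv.1, hv.2⟩) (hacyc i)⟩

lemma DicolorableOn.mono {k' : ℕ} (hk : k ≤ k') (h : DicolorableOn A s k) :
    DicolorableOn A s k' := by
  obtain ⟨c, hlt, hacyc⟩ := h
  exact ⟨c, fun v hv => (hlt v hv).trans_le hk, hacyc⟩

lemma dicolorableOn_empty : DicolorableOn A ∅ k :=
  ⟨fun _ => 0, fun _ hv => hv.elim, fun _ _ hv =>
    (Relation.TransGen.head'_iff.1 hv).elim fun _ h => h.1.1.1⟩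

lemma dicolorableOn_card [Fintype V] (hA : Oriented A) (s : Set V) :
    DicolorableOn A s (Fintype.card V) := by
  refine ⟨fun v => Fintype.equivFin V v, fun v _ => (Fintype.equivFin V v).isLt, fun i v hv => ?_⟩
  obtain ⟨w, ⟨hv, hw, hvw⟩, -⟩ := Relation.TransGen.head'_iff.1 hv
  obtain rfl : v = w := (Fintype.equivFin V).injective (Fin.val_injective (hv.2.trans hw.2.symm))
  exact hA v v hvw hvw

lemma dicolorableOn_of_dichi_le [Fintype V] (hA : Oriented A) (h : dichi A s ≤ k) :
    DicolorableOn A s k :=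
  DicolorableOn.mono h (Nat.sInf_mem (s := {k | DicolorableOn A s k}) ⟨_, dicolorableOn_card hA s⟩)

lemma _root_.Relation.TransGen.antitone_of_step {α β : Type*} [Preorder β] {r : α → α → Prop}
    {f : α → β} (hf : ∀ x y, r x y → f y ≤ f x) {a b : α} (hab : Relation.TransGen r a b) :
    f b ≤ f a := by
  induction hab with
  | single h => exact hf _ _ h
  | tail _ h ih => exact (hf _ _ h).trans ih

lemma _root_.Relation.TransGen.level_of_antitone {α β : Type*} [PartialOrder β] {r : α → α → Prop}
    {f : α → β} (hf : ∀ x y, r x y → f y ≤ f x) {a b : α} (hab : Relation.TransGen r a b)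
    (hb : f b = f a) : Relation.TransGen (fun x y => r x y ∧ f x = f a ∧ f y = f a) a b := by
  induction hab with
  | single h => exact .single ⟨h, rfl, hb⟩
  | @tail c d hac hcd ih =>
    have hc : f c = f a :=
      le_antisymm (hac.antitone_of_step hf) (hb ▸ hf c d hcd)
    exact (ih hc).tail ⟨hcd, hc, hb⟩

lemma AcyclicOn.of_levels {β : Type*} [PartialOrder β] {f : V → β}
    (hf : ∀ x ∈ s, ∀ y ∈ s, A x y → f y ≤ f x)
    (hlev : ∀ v ∈ s, AcyclicOn A {w | w ∈ s ∧ f w = f v}) : AcyclicOn A s := by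
  intro v hv
  obtain ⟨-, ⟨hvs, -⟩, -⟩ := Relation.TransGen.head'_iff.1 hv
  refine hlev v hvs v (Relation.TransGen.mono ?_ _ _
    (hv.level_of_antitone (fun x y h => hf x h.1 y h.2.1 h.2.2) rfl))
  rintro x y ⟨⟨hx, hy, hxy⟩, hfx, hfy⟩
  exact ⟨⟨hx, hfx⟩, ⟨hy, hfy⟩, hxy⟩

/-- Colour by `f mod m` and, within each level of `f`, by a dicolouring of that level: inside a
colour class every arc weakly decreases `f`, so a cycle stays in one level. -/
theorem dicolorableOn_of_jump_lt {m γ : ℕ} (hm : 0 < m) (f : V → ℕ)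
    (hjump : ∀ x ∈ s, ∀ y ∈ s, A x y → f y < f x + m)
    (hlev : ∀ v ∈ s, DicolorableOn A {w | w ∈ s ∧ f w = f v} γ) :
    DicolorableOn A s (m * γ) := by
  have hlev' : ∀ i, DicolorableOn A {w | w ∈ s ∧ f w = i} γ := by
    intro i
    by_cases hi : ∃ v ∈ s, f v = i
    · obtain ⟨v, hv, rfl⟩ := hi
      exact hlev v hv
    · exact dicolorableOn_empty.subset fun w hw => hi ⟨w, hw⟩
  choose c hc_lt hc_acyc using hlev'
  refine ⟨fun v => m * c (f v) v + f v % m, fun v hv => ?_, fun t => ?_⟩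
  · have hcv := hc_lt (f v) v ⟨hv, rfl⟩
    have hr := Nat.mod_lt (f v) hm
    nlinarith
  refine AcyclicOn.of_levels (f := f) ?_ ?_
  · rintro x ⟨hx, hxt⟩ y ⟨hy, hyt⟩ hxy
    have hmod : f y % m = f x % m := by
      simpa only [Nat.mul_add_mod, Nat.mod_mod] using congrArg (· % m) (hyt.trans hxt.symm)
    exact Nat.ModEq.le_of_lt_add hmod (hjump x hx y hy hxy)
  · rintro v ⟨hv, hvt : m * c (f v) v + f v % m = t⟩
    refine (hc_acyc (f v) (c (f v) v)).subset ?_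
    rintro w ⟨⟨hw, hwt : m * c (f w) w + f w % m = t⟩, hfw⟩
    refine ⟨⟨hw, hfw⟩, Nat.eq_of_mul_eq_mul_left hm ?_⟩
    rw [hfw] at hwt
    omega

end Dicoloring

section Path

variable {A : V → V → Prop} {ℓ : ℕ} {p : ℕ → V}

/-- The path `p 1 ⋯ p i u v p j ⋯ p ℓ`, indexed from `1` like `p`. -/
def detour (p : ℕ → V) (i j : ℕ) (u v : V) (k : ℕ) : V :=
  if k = i + 1 then u else if k = i + 2 then v else p (if k ≤ i then k else k - (i + 3) + j)

lemma detour_of_ne {i j : ℕ} {u v : V} {k : ℕ} (h1 : k ≠ i + 1) (h2 : k ≠ i + 2) :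
    detour p i j u v k = p (if k ≤ i then k else k - (i + 3) + j) := by
  simp only [detour, if_neg h1, if_neg h2]

lemma isDirPath_detour {i j : ℕ} {u v : V} (hp : IsDirPath A ℓ p) (hi : 1 ≤ i) (hij : i < j)
    (hj : j ≤ ℓ) (hu : u ∉ pathSet ℓ p) (hv : v ∉ pathSet ℓ p) (huv : u ≠ v)
    (hiu : A (p i) u) (huv' : A u v) (hvj : A v (p j)) :
    IsDirPath A (i + 3 + (ℓ - j)) (detour p i j u v) := by
  have hmem : ∀ k ∈ Set.Icc 1 (i + 3 + (ℓ - j)), k ≠ i + 1 → k ≠ i + 2 →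
      detour p i j u v k ∈ pathSet ℓ p := by
    rintro k ⟨hk1, hkm⟩ h1 h2
    rw [detour_of_ne h1 h2]
    exact ⟨_, by split_ifs <;> constructor <;> omega, rfl⟩
  have hnew : ∀ k, (k = i + 1 ∨ k = i + 2) → detour p i j u v k ∉ pathSet ℓ p := by
    rintro k (rfl | rfl) <;> simpa [detour]
  refine ⟨by omega, fun a ha b hb hab => ?_, fun k hk1 hkm => ?_⟩
  · obtain ⟨ha1, ham⟩ := ha
    obtain ⟨hb1, hbm⟩ := hb
    by_cases hsa : a = i + 1 ∨ a = i + 2 <;> by_cases hsb : b = i + 1 ∨ b = i + 2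
    · rcases hsa with rfl | rfl <;> rcases hsb with rfl | rfl <;> simp_all [detour]
    · exact absurd (hab ▸ hmem b ⟨hb1, hbm⟩ (by omega) (by omega)) (hnew a hsa)
    · exact absurd (hab ▸ hmem a ⟨ha1, ham⟩ (by omega) (by omega)) (hnew b hsb)
    · rw [detour_of_ne (by omega) (by omega), detour_of_ne (by omega) (by omega)] at hab
      have := hp.2.1 (by split_ifs <;> constructor <;> omega)
        (by split_ifs <;> constructor <;> omega) hab
      split_ifs at this <;> omega
  · rcases (by omega : k < i ∨ k = i ∨ k = i + 1 ∨ k = i + 2 ∨ i + 3 ≤ k)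
      with h | rfl | rfl | rfl | h
    · rw [detour_of_ne (by omega) (by omega), detour_of_ne (by omega) (by omega),
        if_pos h.le, if_pos (Nat.succ_le_of_lt h)]
      exact hp.2.2 k hk1 (by omega)
    · simpa [detour] using hiu
    · simpa [detour] using huv'
    · simpa [detour, show i + 2 + 1 = i + 3 by omega] using hvj
    · rw [detour_of_ne (by omega) (by omega), detour_of_ne (by omega) (by omega),
        if_neg (by omega), if_neg (by omega),
        show k + 1 - (i + 3) + j = k - (i + 3) + j + 1 by omega]
      exact hp.2.2 _ (by omega) (by omega)

theorem IsShortestDirPath.le_add_three_of_detour (hp : IsShortestDirPath A ℓ p) {i j : ℕ}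
    (hi : 1 ≤ i) (hj : j ≤ ℓ) {u v : V} (hu : u ∉ pathSet ℓ p) (hv : v ∉ pathSet ℓ p)
    (huv : u ≠ v) (hiu : A (p i) u) (huv' : A u v) (hvj : A v (p j)) : j ≤ i + 3 := by
  by_contra! hji
  have hq := hp.2 _ _ (isDirPath_detour hp.1 hi (by omega) hj hu hv huv hiu huv' hvj)
    (by rw [detour_of_ne (by omega) (by omega), if_pos hi])
    (by rw [detour_of_ne (by omega) (by omega), if_neg (by omega)]; congr 1; omega)
  omega

end Path

section FirstLastNeighbor

variable {A : V → V → Prop} {ℓ : ℕ} {p : ℕ → V} {v : V}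

def adjIdx (A : V → V → Prop) (ℓ : ℕ) (p : ℕ → V) (v : V) : Set ℕ :=
  {k | 1 ≤ k ∧ k ≤ ℓ ∧ Adj A v (p k)}

/-- For `v ∈ N(P)` this is the index of the first neighbour of `v` on `P` (junk `0` otherwise). -/
noncomputable def firstIdx (A : V → V → Prop) (ℓ : ℕ) (p : ℕ → V) (v : V) : ℕ :=
  sInf (adjIdx A ℓ p v)

/-- For `v ∈ N(P)` this is the index of the last neighbour of `v` on `P` (junk `0` otherwise). -/
noncomputable def lastIdx (A : V → V → Prop) (ℓ : ℕ) (p : ℕ → V) (v : V) : ℕ :=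
  sSup (adjIdx A ℓ p v)

lemma adjIdx_nonempty (hv : v ∈ pathNbrs A ℓ p) : (adjIdx A ℓ p v).Nonempty := by
  obtain ⟨_, ⟨k, hk, rfl⟩, hadj⟩ := Set.mem_iUnion₂.1 hv.1
  exact ⟨k, hk.1, hk.2, adj_comm.1 hadj⟩

lemma firstIdx_mem (hv : v ∈ pathNbrs A ℓ p) : firstIdx A ℓ p v ∈ adjIdx A ℓ p v :=
  Nat.sInf_mem (adjIdx_nonempty hv)

lemma lastIdx_mem (hv : v ∈ pathNbrs A ℓ p) : lastIdx A ℓ p v ∈ adjIdx A ℓ p v :=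
  Nat.sSup_mem (adjIdx_nonempty hv) ⟨ℓ, fun _ hk => hk.2.1⟩

lemma firstIdx_le_lastIdx (hv : v ∈ pathNbrs A ℓ p) : firstIdx A ℓ p v ≤ lastIdx A ℓ p v :=
  Nat.sInf_le (lastIdx_mem hv)

lemma mem_Fatt_firstIdx (hv : v ∈ pathNbrs A ℓ p) : v ∈ Fatt A ℓ p (firstIdx A ℓ p v) := by
  refine ⟨hv, (firstIdx_mem hv).2.2, fun i hi1 hi hadj => ?_⟩
  have hiℓ : i ≤ ℓ := by have := (firstIdx_mem hv).2.1; omega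
  exact (Nat.sInf_le (show i ∈ adjIdx A ℓ p v from ⟨hi1, hiℓ, hadj⟩)).not_gt hi

lemma mem_Latt_lastIdx (hv : v ∈ pathNbrs A ℓ p) : v ∈ Latt A ℓ p (lastIdx A ℓ p v) := by
  refine ⟨hv, (lastIdx_mem hv).2.2, fun j hj hjℓ hadj => ?_⟩
  have hj1 : 1 ≤ j := by have := (lastIdx_mem hv).1; omega
  exact (le_csSup ⟨ℓ, fun _ hk => hk.2.1⟩ (show j ∈ adjIdx A ℓ p v from ⟨hj1, hjℓ, hadj⟩)).not_gt hj

lemma adjIdx_subset_Ioo_of_mem_Ra (hv : v ∈ Ra A ℓ p) : adjIdx A ℓ p v ⊆ Set.Ioo 1 ℓ := by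
  have hend : ∀ k ∈ ({1, ℓ} : Set ℕ), k ∉ adjIdx A ℓ p v := by
    rintro k hk ⟨hk1, hkℓ, hadj⟩
    refine hv.2 (Or.inl ⟨Set.mem_iUnion₂.2 ⟨p k, ?_, adj_comm.1 hadj⟩, ?_⟩)
    · rcases hk with rfl | rfl <;> simp
    · rintro (h | h)
      · exact hv.1.2 ⟨1, ⟨le_rfl, by omega⟩, h.symm⟩
      · exact hv.1.2 ⟨ℓ, ⟨by omega, le_rfl⟩, h.symm⟩
  intro k hk
  exact ⟨hk.1.lt_of_ne fun h => hend 1 (by simp) (h ▸ hk),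
    hk.2.1.lt_of_ne fun h => hend ℓ (by simp) (h ▸ hk)⟩

lemma two_le_firstIdx (hv : v ∈ Ra A ℓ p) : 2 ≤ firstIdx A ℓ p v :=
  (adjIdx_subset_Ioo_of_mem_Ra hv (firstIdx_mem hv.1)).1

lemma lastIdx_lt (hv : v ∈ Ra A ℓ p) : lastIdx A ℓ p v < ℓ :=
  (adjIdx_subset_Ioo_of_mem_Ra hv (lastIdx_mem hv.1)).2

/-- Membership in `R^a` excludes `F_i⁺` and `L_j⁻`, which fixes the directions of the arcs. -/
lemma arc_firstIdx_of_mem_Ra (hv : v ∈ Ra A ℓ p) : A (p (firstIdx A ℓ p v)) v := by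
  refine (firstIdx_mem hv.1).2.2.resolve_left fun h => hv.2 (Or.inr (Or.inl ?_))
  have := firstIdx_le_lastIdx hv.1
  have := lastIdx_lt hv
  exact Set.mem_iUnion₂.2
    ⟨_, ⟨two_le_firstIdx hv, by omega⟩, mem_Fatt_firstIdx hv.1, h⟩

lemma arc_lastIdx_of_mem_Ra (hv : v ∈ Ra A ℓ p) : A v (p (lastIdx A ℓ p v)) := by
  refine (lastIdx_mem hv.1).2.2.resolve_right fun h => hv.2 (Or.inr (Or.inr ?_))
  have := firstIdx_le_lastIdx hv.1
  have := two_le_firstIdx hv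
  exact Set.mem_iUnion₂.2
    ⟨_, ⟨by omega, by have := lastIdx_lt hv; omega⟩, mem_Latt_lastIdx hv.1, h⟩

lemma firstIdx_lt_lastIdx (hA : Oriented A) (hv : v ∈ Ra A ℓ p) :
    firstIdx A ℓ p v < lastIdx A ℓ p v := by
  refine (firstIdx_le_lastIdx hv.1).lt_of_ne fun h => hA _ _ (arc_firstIdx_of_mem_Ra hv) ?_
  rw [h]
  exact arc_lastIdx_of_mem_Ra hv

lemma lastIdx_le_firstIdx_add_three (hA : Oriented A) (hp : IsShortestDirPath A ℓ p)
    {u w : V} (hu : u ∈ Ra A ℓ p) (hw : w ∈ Ra A ℓ p) (huw : A u w) :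
    lastIdx A ℓ p w ≤ firstIdx A ℓ p u + 3 := by
  have := two_le_firstIdx hu
  refine hp.le_add_three_of_detour (by omega) (lastIdx_lt hw).le hu.1.2 hw.1.2
    (by rintro rfl; exact hA u u huw huw) (arc_firstIdx_of_mem_Ra hu) huw (arc_lastIdx_of_mem_Ra hw)

end FirstLastNeighbor

theorem A4free_dichi_Ra_general {V : Type*} [Fintype V]
    (A : V → V → Prop) (hA : Oriented A)
    (ℓ : ℕ) (p : ℕ → V) (hp : IsShortestDirPath A ℓ p)
    (γ : ℕ) (hγ : ∀ i, 1 ≤ i → i ≤ ℓ → dichi A (nbr A (p i)) ≤ γ) :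
    dichi A (Ra A ℓ p) ≤ 3 * γ := by
  refine Nat.sInf_le (dicolorableOn_of_jump_lt (by norm_num) (firstIdx A ℓ p) ?_ ?_)
  · intro x hx y hy hxy
    have hdetour := lastIdx_le_firstIdx_add_three hA hp hx hy hxy
    have hfirst_lt_last := firstIdx_lt_lastIdx hA hy
    omega
  · intro v hv
    have h2 := two_le_firstIdx hv
    have hℓ := (firstIdx_mem hv.1).2.1
    refine (dicolorableOn_of_dichi_le hA (hγ _ (by omega) hℓ)).subset ?_
    rintro w ⟨hw, hwv⟩
    rw [← hwv]
    exact Or.inl (arc_firstIdx_of_mem_Ra hw)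

/-- in an `A⃗4`-free oriented graph, for a shortest directed path
`P = p 1 → ⋯ → p ℓ` with `χ⃗(N(v)) ≤ γ` for each `v ∈ V(P)`, `χ⃗(R^a) ≤ 3γ`. -/
theorem A4free_dichi_Ra {V : Type*} [Fintype V]
    (A : V → V → Prop) (hA : Oriented A) (hfree : Free A A4vec)
    (ℓ : ℕ) (p : ℕ → V) (hp : IsShortestDirPath A ℓ p)
    (γ : ℕ) (hγ : ∀ i, 1 ≤ i → i ≤ ℓ → dichi A (nbr A (p i)) ≤ γ) :
    dichi A (Ra A ℓ p) ≤ 3 * γ :=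
  A4free_dichi_Ra_general A hA ℓ p hp γ hγ

end DichiP4
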